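/- arXiv:1106.0287 — 6 statements merged into one kernel-verified Lean document; each statement's English description precedes it below -/
import Mathlib

section
/- Let S be a semigroup of contractions on a Hilbert space H containing an idempotent P such that P S P is a group with unit P. Then the range of P equals { ξ ∈ H : ‖Tξ‖ = ‖ξ‖ for all T ∈ S }. -/
/-!
A contractive idempotent `P` on a Hilbert space is an orthogonal projection: for `u` in its range
and `v` in its kernel, `P (u + c • v) = u` gives `‖u‖ ≤ ‖u + c • v‖` for every scalar `c`, which
forces `u ⟂ v`. An orthogonal projection preserves the norm of exactly the vectors of its range.
Conversely, if `(PRP)(PTP) = P` then every `ξ = Pη` is recovered from `Tξ` by the contraction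
`PRP ∘ P`, so `‖ξ‖ ≤ ‖Tξ‖`.
-/

open scoped InnerProductSpace

section
variable {𝕜 E : Type*} [RCLike 𝕜] [NormedAddCommGroup E] [InnerProductSpace 𝕜 E]

theorem inner_eq_zero_of_forall_norm_le_norm_add_smul {x y : E}
    (h : ∀ c : 𝕜, ‖x‖ ≤ ‖x + c • y‖) : ⟪y, x⟫_𝕜 = 0 := by
  set K := 𝕜 ∙ y
  -- test the hypothesis at `c • y = -K.starProjection x`
  obtain ⟨a, ha⟩ := Submodule.mem_span_singleton.1 (K.starProjection_apply_mem x)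
  have hle : ‖x‖ ^ 2 ≤ ‖Kᗮ.starProjection x‖ ^ 2 := by
    rw [K.starProjection_orthogonal_val, ← ha, sub_eq_add_neg, ← neg_smul]
    gcongr
    exact h (-a)
  have hzero : K.starProjection x = 0 := by
    have := K.norm_sq_eq_add_norm_sq_starProjection x
    rw [← norm_eq_zero]
    nlinarith [norm_nonneg (K.starProjection x)]
  exact Submodule.mem_orthogonal_singleton_iff_inner_right.1
    (K.starProjection_apply_eq_zero_iff.1 hzero)

variable [CompleteSpace E]

theorem ContinuousLinearMap.isStarProjection_of_norm_apply_le {P : E →L[𝕜] E}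
    (hidem : IsIdempotentElem P) (hP : ∀ x, ‖P x‖ ≤ ‖x‖) : IsStarProjection P := by
  have hidem' := IsIdempotentElem.toLinearMap hidem
  refine P.isStarProjection_iff_isSymmetricProjection.2
    ⟨hidem', (LinearMap.IsIdempotentElem.isSymmetric_iff_isOrtho_range_ker hidem').2 ?_⟩
  rw [Submodule.isOrtho_iff_inner_eq]
  rintro _ ⟨u, rfl⟩ v (hv : P v = 0)
  rw [inner_eq_zero_symm]
  refine inner_eq_zero_of_forall_norm_le_norm_add_smul fun c => ?_
  calc ‖P u‖ = ‖P (P u + c • v)‖ := by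
        rw [map_add, map_smul, hv, smul_zero, add_zero, ← mul_apply_eq_comp, hidem.eq]
    _ ≤ ‖P u + c • v‖ := hP _

theorem IsStarProjection.mem_range_iff_norm_apply_eq {P : E →L[𝕜] E} (hP : IsStarProjection P)
    (x : E) : x ∈ P.range ↔ ‖P x‖ = ‖x‖ := by
  obtain ⟨_, hPeq⟩ := isStarProjection_iff_eq_starProjection_range.1 hP
  have := P.range.mem_iff_norm_starProjection x
  rwa [← hPeq] at this
end

theorem norm_le_norm_apply_of_comp_eq_self {𝕜 E : Type*} [Semiring 𝕜] [SeminormedAddCommGroup E]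
    [Module 𝕜 E] {P R T : E →L[𝕜] E} (hP : ∀ x, ‖P x‖ ≤ ‖x‖) (hR : ∀ x, ‖R x‖ ≤ ‖x‖)
    (h : (P ∘L R ∘L P) ∘L (P ∘L T ∘L P) = P) (x : E) : ‖P x‖ ≤ ‖T (P x)‖ :=
  calc ‖P x‖ = ‖P (R (P (P (T (P x)))))‖ := congr(‖$h x‖).symm
    _ ≤ ‖T (P x)‖ := (hP _).trans <| (hR _).trans <| (hP _).trans (hP _)

theorem range_of_minimal_projection_eq_isometric_vectors_general
    {H : Type*} [NormedAddCommGroup H] [InnerProductSpace ℂ H] [CompleteSpace H]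
    (S : Set (H →L[ℂ] H))
    (hcontr : ∀ T ∈ S, ∀ ξ : H, ‖T ξ‖ ≤ ‖ξ‖)
    (P : H →L[ℂ] H) (hP : P ∈ S) (hidem : P ∘L P = P)
    (hgroup : ∀ T ∈ S, ∃ R ∈ S, (P ∘L R ∘L P) ∘L (P ∘L T ∘L P) = P) :
    Set.range P = {ξ : H | ∀ T ∈ S, ‖T ξ‖ = ‖ξ‖} := by
  have hstar := ContinuousLinearMap.isStarProjection_of_norm_apply_le hidem (hcontr P hP)
  ext ξ
  refine ⟨?_, fun hξ => (hstar.mem_range_iff_norm_apply_eq ξ).2 (hξ P hP)⟩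
  rintro ⟨η, rfl⟩ T hT
  obtain ⟨R, hR, hRT⟩ := hgroup T hT
  exact le_antisymm (hcontr T hT _)
    (norm_le_norm_apply_of_comp_eq_self (hcontr P hP) (hcontr R hR) hRT η)

/-- If `S` is a semigroup of Hilbert-space contractions containing an idempotent `P` such that
`PSP` is a group with unit `P`, then the range of `P` equals the set of vectors whose norm is
preserved by every member of `S`. -/
theorem range_of_minimal_projection_eq_isometric_vectors
    {H : Type*} [NormedAddCommGroup H] [InnerProductSpace ℂ H] [CompleteSpace H]
    (S : Set (H →L[ℂ] H))
    (hcomp : ∀ T ∈ S, ∀ R ∈ S, T ∘L R ∈ S)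
    (hcontr : ∀ T ∈ S, ∀ ξ : H, ‖T ξ‖ ≤ ‖ξ‖)
    (P : H →L[ℂ] H) (hP : P ∈ S) (hidem : P ∘L P = P)
    (hgroup : ∀ T ∈ S, ∃ R ∈ S, (P ∘L R ∘L P) ∘L (P ∘L T ∘L P) = P) :
    Set.range P = {ξ : H | ∀ T ∈ S, ‖T ξ‖ = ‖ξ‖} :=
  range_of_minimal_projection_eq_isometric_vectors_general S hcontr P hP hidem hgroup
end

section
/- Let A be a C*-algebra and S : A → A a positive unital linear map satisfying the Schwarz inequality S(x)* S(x) ≤ S(x* x) for all x ∈ A. Then the set { x ∈ A : S(x)* S(x) = S(x* x) } equals { x ∈ A : S(x)* S(y) = S(x* y) for all y ∈ A }. -/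
/-- Multiplicative domain characterization: for a Schwarz map `S` on a C*-algebra,
`S(x)*S(x) = S(x*x)` holds iff `S(x)*S(y) = S(x*y)` for all `y`. -/
theorem schwarz_map_multiplicative_domain
    {A : Type*} [NormedRing A] [StarRing A] [CStarRing A] [NormedAlgebra ℂ A] [StarModule ℂ A]
    [PartialOrder A] [StarOrderedRing A] [CompleteSpace A]
    (S : A →ₗ[ℂ] A) (hS : ∀ x : A, star (S x) * S x ≤ S (star x * x)) :
    {x : A | star (S x) * S x = S (star x * x)} =
      {x : A | ∀ y : A, star (S x) * S y = S (star x * y)} := by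
  letI : CStarAlgebra A := {}
  set D : A → A → A := fun x y => S (star x * y) - star (S x) * S y with hDdef
  have hD0 : ∀ z, 0 ≤ D z z := fun z => sub_nonneg.mpr (hS z)
  have hexp : ∀ (c : ℂ) (x y : A), D (x + c • y) (x + c • y)
      = D x x + c • D x y + star c • D y x + (star c * c) • D y y := by
    intro c x y
    simp only [hDdef, star_add, star_smul, add_mul, mul_add, map_add, map_smul,
      smul_mul_assoc, mul_smul_comm, smul_smul, smul_sub, smul_add]
    module
  have key : ∀ x : A, D x x = 0 → ∀ y, D x y = 0 := by
    intro x hx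
    have hczero : ∀ y : A, D x y + D y x = 0 := by
      intro y
      set c := D x y + D y x with hc
      set d := D y y with hd
      have hsum : ∀ t : ℝ, 0 ≤ (t : ℂ) • c + ((t : ℂ) * (t : ℂ)) • d := by
        intro t
        have h := hD0 (x + (t : ℂ) • y)
        rw [hexp, hx] at h
        simp only [Complex.star_def, Complex.conj_ofReal, zero_add] at h
        have he : (t : ℂ) • D x y + (t : ℂ) • D y x + ((t : ℂ) * (t : ℂ)) • D y y
            = (t : ℂ) • c + ((t : ℂ) * (t : ℂ)) • d := by
          rw [hc, hd]; module
        exact he ▸ h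
      have hnorm : ∀ t : ℝ, 0 < t → ‖c‖ ≤ 3 * t * ‖d‖ := by
        intro t ht
        have h1 := hsum t
        have h2 := hsum (-t)
        have hle : (t : ℂ) • c + ((t : ℂ) * (t : ℂ)) • d
            ≤ ((2 : ℂ) * (t : ℂ) * (t : ℂ)) • d := by
          rw [← sub_nonneg]
          have : ((2 : ℂ) * (t : ℂ) * (t : ℂ)) • d - ((t : ℂ) • c + ((t : ℂ) * (t : ℂ)) • d)
              = ((-t : ℝ) : ℂ) • c + (((-t : ℝ) : ℂ) * ((-t : ℝ) : ℂ)) • d := by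
            push_cast
            module
          rw [this]
          exact h2
        have h3 : ‖(t : ℂ) • c + ((t : ℂ) * (t : ℂ)) • d‖
            ≤ ‖((2 : ℂ) * (t : ℂ) * (t : ℂ)) • d‖ :=
          CStarAlgebra.norm_le_norm_of_nonneg_of_le h1 hle
        have e1 : ‖((2 : ℂ) * (t : ℂ) * (t : ℂ)) • d‖ = 2 * t * t * ‖d‖ := by
          rw [norm_smul]
          simp [abs_of_pos ht, mul_assoc]
        have e3 : ‖(t : ℂ) • c‖ = t * ‖c‖ := by
          rw [norm_smul]; simp [abs_of_pos ht]
        have e4 : ‖((t : ℂ) * (t : ℂ)) • d‖ = t * t * ‖d‖ := by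
          rw [norm_smul]; simp [abs_of_pos ht, mul_assoc]
        have h4 : t * ‖c‖ ≤ 2 * t * t * ‖d‖ + t * t * ‖d‖ := by
          have h5 : ‖(t : ℂ) • c‖ ≤ ‖(t : ℂ) • c + ((t : ℂ) * (t : ℂ)) • d‖
              + ‖((t : ℂ) * (t : ℂ)) • d‖ := by
            calc ‖(t : ℂ) • c‖
                = ‖((t : ℂ) • c + ((t : ℂ) * (t : ℂ)) • d) - ((t : ℂ) * (t : ℂ)) • d‖ := by
                  rw [add_sub_cancel_right]
              _ ≤ _ := norm_sub_le _ _
          rw [e3, e4] at h5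
          have h6 := h3.trans_eq e1
          linarith
        nlinarith [norm_nonneg c, norm_nonneg d]
      have : ‖c‖ ≤ 0 := by
        by_contra h
        push_neg at h
        have ht : 0 < ‖c‖ / (3 * ‖d‖ + 3) := by positivity
        have h5 := hnorm _ ht
        have hd0 : (0 : ℝ) ≤ ‖d‖ := norm_nonneg _
        have hq : 3 * (‖c‖ / (3 * ‖d‖ + 3)) * ‖d‖ = ‖c‖ * (3 * ‖d‖) / (3 * ‖d‖ + 3) := by
          ring
        rw [hq] at h5
        have h6 : ‖c‖ * (3 * ‖d‖) / (3 * ‖d‖ + 3) < ‖c‖ := by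
          rw [div_lt_iff₀ (by positivity)]
          nlinarith
        exact absurd (h5.trans_lt h6) (lt_irrefl _)
      have := norm_le_zero_iff.mp this
      simpa [hc] using this
    intro y
    have h1 := hczero y
    have h2 := hczero (Complex.I • y)
    have e1 : D x (Complex.I • y) = Complex.I • D x y := by
      simp [hDdef, mul_smul_comm, smul_sub]
    have e2 : D (Complex.I • y) x = (-Complex.I) • D y x := by
      simp [hDdef, star_smul, smul_mul_assoc, smul_sub, Complex.star_def, Complex.conj_I]
    rw [e1, e2] at h2
    have h3 : D x y = D y x := by
      have h2' := congrArg (fun a => (-Complex.I) • a) h2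
      simp only [smul_add, smul_smul, smul_zero] at h2'
      have hI : (-Complex.I) * Complex.I = 1 := by
        rw [neg_mul, Complex.I_mul_I, neg_neg]
      have hI2 : (-Complex.I) * (-Complex.I) = -1 := by
        rw [neg_mul_neg, Complex.I_mul_I]
      rw [hI, hI2, one_smul, neg_one_smul] at h2'
      exact add_neg_eq_zero.mp h2'
    have h4 : (2 : ℂ) • D x y = 0 := by
      rw [two_smul]
      nth_rewrite 2 [h3]
      exact h1
    have := smul_eq_zero.mp h4
    rcases this with h | h
    · exact absurd h (by norm_num)
    · exact h
  ext x
  simp only [Set.mem_setOf_eq]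
  constructor
  · intro hx y
    have hxx : D x x = 0 := by rw [hDdef]; simp [hx]
    have := key x hxx y
    rw [hDdef] at this
    have := sub_eq_zero.mp this
    exact this.symm
  · intro h
    exact h x
end

section
/- Let A be a C*-algebra and S : A → A an invertible linear map such that both S and S⁻¹ satisfy the Schwarz inequality: S(x)*S(x) ≤ S(x*x) and S⁻¹(x)*S⁻¹(x) ≤ S⁻¹(x*x) for all x ∈ A. Then S is multiplicative on squares: S(x*x) = S(x)*S(x) for all x ∈ A, and hence S(x*y) = S(x)*S(y) for all x, y ∈ A, i.e. S is a *-homomorphism. -/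
/-!
A Schwarz map `f` is positive, since it sends each generator `star s * s` of the positive cone
above the positive element `star (f s) * f s`; being additive, it is then monotone. Applying the
Schwarz inequality of `S⁻¹` at `S x` gives `star x * x ≤ S⁻¹ (star (S x) * S x)`, and monotonicity
of `S` turns this into the reverse Schwarz inequality, so `S (star x * x) = star (S x) * S x`.
Polarization extends this to `S (star x * y) = star (S x) * S y`.
-/

open Complex

section SchwarzMap

variable {A B F : Type*} [FunLike F A B]

theorem map_nonneg_of_schwarz [NonUnitalSemiring A] [StarRing A] [PartialOrder A]
    [StarOrderedRing A] [NonUnitalSemiring B] [StarRing B] [PartialOrder B] [StarOrderedRing B]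
    [AddMonoidHomClass F A B] {f : F} (hf : ∀ x, star (f x) * f x ≤ f (star x * x))
    {a : A} (ha : 0 ≤ a) : 0 ≤ f a := by
  rw [StarOrderedRing.nonneg_iff] at ha
  induction ha using AddSubmonoid.closure_induction with
  | mem _ hz =>
    obtain ⟨s, rfl⟩ := hz
    exact (star_mul_self_nonneg (f s)).trans (hf s)
  | zero => simp
  | add _ _ _ _ hu hv => simpa only [map_add] using add_nonneg hu hv

variable [NonUnitalRing A] [StarRing A] [PartialOrder A] [StarOrderedRing A]
  [NonUnitalRing B] [StarRing B] [PartialOrder B] [StarOrderedRing B]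

theorem monotone_of_schwarz [AddMonoidHomClass F A B] {f : F}
    (hf : ∀ x, star (f x) * f x ≤ f (star x * x)) : Monotone f := fun a b hab => by
  simpa only [map_sub, sub_nonneg] using map_nonneg_of_schwarz hf (sub_nonneg.mpr hab)

theorem AddEquiv.map_star_mul_self_of_schwarz (e : A ≃+ B)
    (he : ∀ x, star (e x) * e x ≤ e (star x * x))
    (he' : ∀ y, star (e.symm y) * e.symm y ≤ e.symm (star y * y)) (x : A) :
    e (star x * x) = star (e x) * e x := by
  refine le_antisymm ?_ (he x)
  have hx : star x * x ≤ e.symm (star (e x) * e x) := by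
    simpa only [e.symm_apply_apply] using he' (e x)
  simpa only [e.apply_symm_apply] using monotone_of_schwarz he hx

end SchwarzMap

section Polarization

variable {A B : Type*} [NonUnitalRing A] [StarRing A] [Module ℂ A] [IsScalarTower ℂ A A]
  [SMulCommClass ℂ A A] [StarModule ℂ A]

theorem star_mul_polarization (x y : A) :
    star x * y = (1 / 4 : ℂ) • (star (x + y) * (x + y) - star (x - y) * (x - y)
      - I • (star (x + I • y) * (x + I • y)) + I • (star (x - I • y) * (x - I • y))) := by
  simp only [star_add, star_sub, star_smul, Complex.star_def, conj_I, add_mul, sub_mul, mul_add,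
    mul_sub, mul_smul_comm, smul_mul_assoc, smul_smul, smul_add, smul_sub, smul_neg, neg_smul,
    neg_mul, I_mul_I]
  match_scalars <;> ring

variable [NonUnitalRing B] [StarRing B] [Module ℂ B] [IsScalarTower ℂ B B]
  [SMulCommClass ℂ B B] [StarModule ℂ B]

theorem LinearMap.map_star_mul_of_map_star_mul_self (f : A →ₗ[ℂ] B)
    (hf : ∀ x, f (star x * x) = star (f x) * f x) (x y : A) :
    f (star x * y) = star (f x) * f y := by
  rw [star_mul_polarization x y, star_mul_polarization (f x) (f y)]
  simp only [map_add, map_sub, map_smul, hf]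

end Polarization

theorem invertible_schwarz_map_is_star_hom_general
    {A : Type*} [NormedRing A] [StarRing A] [NormedAlgebra ℂ A] [StarModule ℂ A]
    [PartialOrder A] [StarOrderedRing A]
    (S : A ≃ₗ[ℂ] A)
    (hS : ∀ x : A, star (S x) * S x ≤ S (star x * x))
    (hS' : ∀ x : A, star (S.symm x) * S.symm x ≤ S.symm (star x * x)) :
    (∀ x : A, S (star x * x) = star (S x) * S x) ∧
    (∀ x y : A, S (star x * y) = star (S x) * S y) := by
  have hsq : ∀ x, S (star x * x) = star (S x) * S x :=
    S.toAddEquiv.map_star_mul_self_of_schwarz hS hS'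
  exact ⟨hsq, S.toLinearMap.map_star_mul_of_map_star_mul_self hsq⟩

/-- An invertible linear map on a C*-algebra such that both it and its inverse satisfy the
Schwarz inequality is a *-homomorphism. -/
theorem invertible_schwarz_map_is_star_hom
    {A : Type*} [NormedRing A] [StarRing A] [CStarRing A] [NormedAlgebra ℂ A] [StarModule ℂ A]
    [PartialOrder A] [StarOrderedRing A] [CompleteSpace A]
    (S : A ≃ₗ[ℂ] A)
    (hS : ∀ x : A, star (S x) * S x ≤ S (star x * x))
    (hS' : ∀ x : A, star (S.symm x) * S.symm x ≤ S.symm (star x * x)) :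
    (∀ x : A, S (star x * x) = star (S x) * S x) ∧
    (∀ x y : A, S (star x * y) = star (S x) * S y) :=
  invertible_schwarz_map_is_star_hom_general S hS hS'
end

section
/- Let A be a C*-algebra, P : A → A a positive linear idempotent Schwarz map (P(x)*P(x) ≤ P(x*x)) that is faithful (P(x) = 0 and x ≥ 0 imply x = 0). Then for every x in the range of P one has P(x*x) = x*x. -/
/-- For a faithful positive idempotent Schwarz map `P` on a C*-algebra,
`P(x*x) = x*x` holds for every `x` in the range of `P`. -/
theorem faithful_idempotent_schwarz_preserves_squares
    {A : Type*} [NormedRing A] [StarRing A] [CStarRing A] [NormedAlgebra ℂ A] [StarModule ℂ A]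
    [PartialOrder A] [StarOrderedRing A] [CompleteSpace A]
    (P : A →ₗ[ℂ] A)
    (hidem : ∀ x : A, P (P x) = P x)
    (hpos : ∀ x : A, 0 ≤ x → 0 ≤ P x)
    (hschwarz : ∀ x : A, star (P x) * P x ≤ P (star x * x))
    (hfaithful : ∀ x : A, 0 ≤ x → P x = 0 → x = 0) :
    ∀ x ∈ Set.range P, P (star x * x) = star x * x := by
  rintro x ⟨y, rfl⟩
  have hx : P (P y) = P y := hidem y
  set x := P y
  have h1 : star x * x ≤ P (star x * x) := by
    have := hschwarz x
    rwa [hx] at this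
  have hd : 0 ≤ P (star x * x) - star x * x := sub_nonneg.mpr h1
  have hPd : P (P (star x * x) - star x * x) = 0 := by
    rw [map_sub, hidem, sub_self]
  have := hfaithful _ hd hPd
  exact sub_eq_zero.mp this
end

section
/- Let A be a C*-algebra and P : A → A a faithful positive idempotent Schwarz map. Then P is a conditional expectation onto its range: P(yxz) = y P(x) z for all y, z ∈ ran P and x ∈ A; in particular ran P is closed under multiplication, so it is a C*-subalgebra of A. -/
/-!
Expanding the Schwarz inequality at `x + t • y` for all complex `t` shows that if
`P (star y * y) = star (P y) * P y`, then the defects `P (star x * y) - star (P x) * P y` and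
`P (star y * x) - star (P y) * P x` vanish: a vector `S` with `C + t • S ≥ 0` for all real `t`
is zero, as the positive cone is closed. For a fixed point `y` of `P` the Schwarz inequality
reads `star y * y ≤ P (star y * y)`, and the nonnegative difference is killed by the idempotent
`P`, so faithfulness gives equality. Positive maps preserve `star`, so the fixed points are closed
under `star` and `P` is a bimodule map over them.
-/

open ComplexStarModule Filter Topology

section OrderedVectorSpace

variable {E : Type*} [AddCommGroup E] [PartialOrder E] [Module ℝ E] [PosSMulMono ℝ E]
  [TopologicalSpace E] [ContinuousAdd E] [ContinuousSMul ℝ E] [ClosedIciTopology E]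

theorem nonneg_of_forall_pos_nonneg_add_smul {C S : E} (h : ∀ t : ℝ, 0 < t → 0 ≤ C + t • S) :
    0 ≤ S := by
  have hlim : Tendsto (fun t : ℝ ↦ t⁻¹ • C + S) atTop (𝓝 S) := by
    simpa using ((tendsto_inv_atTop_zero (𝕜 := ℝ)).smul_const C).add_const S
  refine ge_of_tendsto hlim ?_
  filter_upwards [eventually_gt_atTop 0] with t ht
  have := smul_nonneg (inv_nonneg.2 ht.le) (h t ht)
  rwa [smul_add, smul_smul, inv_mul_cancel₀ ht.ne', one_smul] at this

variable [IsOrderedAddMonoid E]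

theorem eq_zero_of_forall_nonneg_add_smul {C S : E} (h : ∀ t : ℝ, 0 ≤ C + t • S) : S = 0 :=
  le_antisymm
    (neg_nonneg.1 <| nonneg_of_forall_pos_nonneg_add_smul fun t _ ↦ by simpa using h (-t))
    (nonneg_of_forall_pos_nonneg_add_smul fun t _ ↦ h t)

end OrderedVectorSpace

section OrderedComplexVectorSpace

variable {E : Type*} [AddCommGroup E] [PartialOrder E] [IsOrderedAddMonoid E] [Module ℂ E]
  [PosSMulMono ℝ E] [TopologicalSpace E] [ContinuousAdd E] [ContinuousSMul ℝ E]
  [ClosedIciTopology E]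

theorem eq_zero_of_forall_nonneg_add_smul_add_star_smul {C E₁ E₂ : E}
    (h : ∀ t : ℂ, 0 ≤ C + t • E₁ + star t • E₂) : E₁ = 0 ∧ E₂ = 0 := by
  have hsum : E₁ + E₂ = 0 := eq_zero_of_forall_nonneg_add_smul fun s ↦ by
    simpa [Complex.coe_smul, smul_add, add_assoc] using h s
  have hdiff : Complex.I • (E₁ - E₂) = 0 := eq_zero_of_forall_nonneg_add_smul (C := C) fun s ↦ by
    convert h (s * Complex.I) using 1
    rw [star_mul', Complex.star_def, Complex.conj_ofReal, Complex.conj_I,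
      ← Complex.coe_smul s (Complex.I • (E₁ - E₂))]
    module
  obtain rfl : E₁ = E₂ := sub_eq_zero.1 ((smul_eq_zero.1 hdiff).resolve_left Complex.I_ne_zero)
  have hE₁ : E₁ = 0 := (smul_eq_zero.1 (by rwa [two_smul] : (2 : ℂ) • E₁ = 0)).resolve_left
    two_ne_zero
  exact ⟨hE₁, hE₁⟩

end OrderedComplexVectorSpace

namespace LinearMap

theorem apply_eq_of_le_apply {R M : Type*} [Semiring R] [AddCommGroup M] [PartialOrder M]
    [IsOrderedAddMonoid M] [Module R M] {P : M →ₗ[R] M} (hidem : ∀ x, P (P x) = P x)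
    (hfaithful : ∀ x, 0 ≤ x → P x = 0 → x = 0) {a : M} (ha : a ≤ P a) : P a = a :=
  sub_eq_zero.1 <| hfaithful _ (sub_nonneg.2 ha) (by rw [map_sub, hidem, sub_self])

variable {A B : Type*} [NonUnitalCStarAlgebra A] [NonUnitalCStarAlgebra B] [PartialOrder B]
  [StarOrderedRing B] {P : A →ₗ[ℂ] B}

theorem map_star_mul_of_map_star_mul_self_eq
    (hschwarz : ∀ x, star (P x) * P x ≤ P (star x * x)) {y : A}
    (hy : P (star y * y) = star (P y) * P y) (x : A) :
    P (star x * y) = star (P x) * P y ∧ P (star y * x) = star (P y) * P x := by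
  have hexpand (t : ℂ) : P (star (x + t • y) * (x + t • y)) - star (P (x + t • y)) * P (x + t • y)
      = (P (star x * x) - star (P x) * P x) + t • (P (star x * y) - star (P x) * P y)
        + star t • (P (star y * x) - star (P y) * P x) := by
    -- the `(star t * t) • (star y * y)` terms cancel by `hy`
    simp only [star_add, star_smul, add_mul, mul_add, smul_mul_assoc, mul_smul_comm,
      map_add, map_smul, hy]
    module
  have := eq_zero_of_forall_nonneg_add_smul_add_star_smul fun t ↦
    hexpand t ▸ sub_nonneg.2 (hschwarz (x + t • y))
  exact ⟨sub_eq_zero.1 this.1, sub_eq_zero.1 this.2⟩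

variable [PartialOrder A] [StarOrderedRing A]

theorem isSelfAdjoint_apply_of_map_nonneg (hpos : ∀ x, 0 ≤ x → 0 ≤ P x) {a : A}
    (ha : IsSelfAdjoint a) : IsSelfAdjoint (P a) := by
  rw [← CFC.posPart_sub_negPart a ha, map_sub]
  exact (hpos _ (CFC.posPart_nonneg a)).isSelfAdjoint.sub
    (hpos _ (CFC.negPart_nonneg a)).isSelfAdjoint

theorem map_star_of_map_nonneg (hpos : ∀ x, 0 ≤ x → 0 ≤ P x) (x : A) :
    P (star x) = star (P x) := by
  have hP (a : selfAdjoint A) : star (P a) = P a :=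
    (isSelfAdjoint_apply_of_map_nonneg hpos a.2).star_eq
  conv_lhs => rw [← realPart_add_I_smul_imaginaryPart x]
  conv_rhs => rw [← realPart_add_I_smul_imaginaryPart x]
  simp [hP, (ℜ x).2.star_eq, (ℑ x).2.star_eq]

section Idempotent

variable {P : A →ₗ[ℂ] A}

theorem map_star_mul_self_of_apply_eq (hidem : ∀ x, P (P x) = P x)
    (hschwarz : ∀ x, star (P x) * P x ≤ P (star x * x))
    (hfaithful : ∀ x, 0 ≤ x → P x = 0 → x = 0) {y : A} (hy : P y = y) :
    P (star y * y) = star (P y) * P y := by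
  rw [apply_eq_of_le_apply hidem hfaithful (by simpa [hy] using hschwarz y), hy]

theorem map_mul_of_apply_eq_left (hpos : ∀ x, 0 ≤ x → 0 ≤ P x) (hidem : ∀ x, P (P x) = P x)
    (hschwarz : ∀ x, star (P x) * P x ≤ P (star x * x))
    (hfaithful : ∀ x, 0 ≤ x → P x = 0 → x = 0) {y : A} (hy : P y = y) (v : A) :
    P (y * v) = y * P v := by
  have hy' : P (star y) = star y := by rw [map_star_of_map_nonneg hpos, hy]
  simpa [hy'] using (map_star_mul_of_map_star_mul_self_eq hschwarz
    (map_star_mul_self_of_apply_eq hidem hschwarz hfaithful hy') v).2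

theorem map_mul_of_apply_eq_right (hpos : ∀ x, 0 ≤ x → 0 ≤ P x) (hidem : ∀ x, P (P x) = P x)
    (hschwarz : ∀ x, star (P x) * P x ≤ P (star x * x))
    (hfaithful : ∀ x, 0 ≤ x → P x = 0 → x = 0) {z : A} (hz : P z = z) (v : A) :
    P (v * z) = P v * z := by
  simpa [map_star_of_map_nonneg hpos, hz] using (map_star_mul_of_map_star_mul_self_eq hschwarz
    (map_star_mul_self_of_apply_eq hidem hschwarz hfaithful hz) (star v)).1

end Idempotent

end LinearMap

/-- A faithful positive idempotent Schwarz map `P` on a C*-algebra is a conditional expectation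
onto its range: `P(yxz) = y P(x) z` for `y, z ∈ ran P`; in particular the range is closed
under multiplication. -/
theorem faithful_idempotent_schwarz_is_conditional_expectation
    {A : Type*} [NormedRing A] [StarRing A] [CStarRing A] [NormedAlgebra ℂ A] [StarModule ℂ A]
    [PartialOrder A] [StarOrderedRing A] [CompleteSpace A]
    (P : A →ₗ[ℂ] A)
    (hidem : ∀ x : A, P (P x) = P x)
    (hpos : ∀ x : A, 0 ≤ x → 0 ≤ P x)
    (hschwarz : ∀ x : A, star (P x) * P x ≤ P (star x * x))
    (hfaithful : ∀ x : A, 0 ≤ x → P x = 0 → x = 0) :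
    (∀ y ∈ Set.range P, ∀ z ∈ Set.range P, ∀ x : A, P (y * x * z) = y * P x * z) ∧
    (∀ y ∈ Set.range P, ∀ z ∈ Set.range P, y * z ∈ Set.range P) := by
  let _ : CStarAlgebra A := { ‹NormedRing A›, ‹StarRing A›, ‹CStarRing A›, ‹NormedAlgebra ℂ A›,
    ‹StarModule ℂ A›, ‹CompleteSpace A› with }
  have fixed : ∀ y ∈ Set.range P, P y = y := by
    rintro _ ⟨w, rfl⟩
    exact hidem w
  have left (y : A) (hy : y ∈ Set.range P) :=
    P.map_mul_of_apply_eq_left hpos hidem hschwarz hfaithful (fixed y hy)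
  have right (z : A) (hz : z ∈ Set.range P) :=
    P.map_mul_of_apply_eq_right hpos hidem hschwarz hfaithful (fixed z hz)
  refine ⟨fun y hy z hz x ↦ ?_, fun y hy z hz ↦ ⟨y * z, ?_⟩⟩
  · rw [mul_assoc, left y hy, right z hz, mul_assoc]
  · rw [left y hy, fixed z hz]
end

section
/- Let A be a unital C*-algebra and T a unital Schwarz map on A. Suppose u is a unitary in A with T(u) = αu and T(u*) = ᾱu* for a unimodular α ∈ ℂ, and u lies in the multiplicative domain of T (T(ux) = T(u)T(x) for all x). Then the spectrum of T (as a bounded operator on A) satisfies Sp(T) = α · Sp(T). -/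
open scoped ComplexOrder Pointwise

/-- If a unital Schwarz map `T` has a unitary `u` in its multiplicative domain with
`T(ux) = α u T(x)` for a unimodular `α`, then the spectrum of `T` satisfies
`Sp(T) = α · Sp(T)`. -/
theorem spectrum_rotation_invariance
    {A : Type*} [NormedRing A] [StarRing A] [CStarRing A] [NormedAlgebra ℂ A] [StarModule ℂ A]
    [PartialOrder A] [StarOrderedRing A] [CompleteSpace A]
    (T : A →L[ℂ] A) (hT1 : T 1 = 1)
    (hschwarz : ∀ x : A, star (T x) * T x ≤ T (star x * x))
    (u : A) (hu : u ∈ unitary A)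
    (α : ℂ) (hα : ‖α‖ = 1)
    (hmul : ∀ x : A, T (u * x) = α • (u * T x)) :
    spectrum ℂ T = α • spectrum ℂ T := by
  have hα0 : α ≠ 0 := by
    intro h; rw [h] at hα; simp at hα
  -- the left-multiplication unit
  set L : (A →L[ℂ] A)ˣ :=
    { val := ContinuousLinearMap.mul ℂ A u
      inv := ContinuousLinearMap.mul ℂ A (star u)
      val_inv := by
        ext x
        simp [← mul_assoc, Unitary.mul_star_self_of_mem hu]
      inv_val := by
        ext x
        simp [← mul_assoc, Unitary.star_mul_self_of_mem hu] } with hL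
  have key : (L⁻¹ : (A →L[ℂ] A)ˣ) * T * L = α • T := by
    ext x
    simp only [Units.val_mul, ContinuousLinearMap.mul_apply', ContinuousLinearMap.coe_mul,
      Function.comp_apply, hL]
    show star u * T (u * x) = (α • T) x
    rw [hmul x]
    simp [mul_smul_comm, ← mul_assoc, Unitary.star_mul_self_of_mem hu]
  have h1 : spectrum ℂ T = spectrum ℂ (α • T) := by
    rw [← key, spectrum.units_conjugate']
  have h2 : spectrum ℂ ((Units.mk0 α hα0 : ℂˣ) • T) = (Units.mk0 α hα0 : ℂˣ) • spectrum ℂ T :=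
    spectrum.unit_smul_eq_smul T (Units.mk0 α hα0)
  simpa using h1.trans h2
end
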